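/- Let y₁ and y₂ be solutions of equations (2.1) and (3.10) respectively on [t₀, τ₀) with y₁(t₀) ≤ y₂(t₀), and assume: (IV) (a₁(t) − a(t))y₁(t)³ + (b₁(t) − b(t))y₁(t)² + (c₁(t) − c(t))y₁(t) + d₁(t) − d(t) ≥ 0 for all t ∈ [t₀, τ₀); (V) (a₂(t) − a(t))y₂(t)³ + (b₂(t) − b(t))y₂(t)² + (c₂(t) − c(t))y₂(t) + d₂(t) − d(t) ≤ 0 for all t ∈ [t₀, τ₀). Then every noncontinuable solution y of the Abel equation (1.1) with y(t₀) ∈ [y₁(t₀), y₂(t₀)] is defined on all of [t₀, τ₀) and satisfies y₁(t) ≤ y(t) ≤ y₂(t) for all t ∈ [t₀, τ₀). Furthermore, if y₁(t₀) < y(t₀) then y₁(t) < y(t) on [t₀, τ₀), and if y(t₀) < y₂(t₀) then y(t) < y₂(t) on [t₀, τ₀). -/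

import Mathlib

/-!
If `y` solves (1.1) and `y₁` solves (2.1), condition (IV) and the factorisation
`x³ - x'³ = (x² + x x' + x'²)(x - x')` give `w' ≥ -g w` for `w = y - y₁` and a continuous `g`;
the integrating factor `exp ∫ g` makes `w exp ∫ g` nondecreasing, so `w` keeps the sign
(weak or strict) it has at `t₀`. The same holds for `y₂ - y` by (V). Thus `y` is trapped between
the continuous functions `y₁` and `y₂`, hence bounded on every `[t₀, s]` with `s < τ₀`. A bounded
solution has bounded derivative, so it has a left limit at `t₁`; if `t₁ < τ₀`, a Picard–Lindelöf
solution starting from that limit continues `y`, contradicting noncontinuability.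
-/

open Set MeasureTheory intervalIntegral

/-- The right-hand side `-(a y³ + b y² + c y + d)` of the Abel equation (1.1). -/
noncomputable def abelRHS (a b c d y : ℝ → ℝ) (t : ℝ) : ℝ :=
  -(a t * y t ^ 3 + b t * y t ^ 2 + c t * y t + d t)

/-- `y` is a solution of the Abel equation `y' + a y³ + b y² + c y + d = 0` on the set `S`. -/
def IsAbelSolOn (a b c d y : ℝ → ℝ) (S : Set ℝ) : Prop :=
  ∀ t ∈ S, HasDerivWithinAt y (abelRHS a b c d y t) S t

/-- The set of real points of the interval `[t₀, τ)`, `τ` an extended real. -/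
def eIco (t₀ : ℝ) (τ : EReal) : Set ℝ := {t : ℝ | t₀ ≤ t ∧ (t : EReal) < τ}

/-- A solution `y` of the Abel equation on `[t₀, t₁) ⊆ [t₀, τ₀)` is noncontinuable if it
cannot be extended to the right as a solution on a larger subinterval of `[t₀, τ₀)`. -/
def Noncontinuable (a b c d : ℝ → ℝ) (t₀ : ℝ) (τ₀ t₁ : EReal) (y : ℝ → ℝ) : Prop :=
  ¬ ∃ (t₂ : EReal) (z : ℝ → ℝ), t₁ < t₂ ∧ t₂ ≤ τ₀ ∧
      IsAbelSolOn a b c d z (eIco t₀ t₂) ∧ EqOn z y (eIco t₀ t₁)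

open Filter Topology

theorem ContinuousOn.exists_hasDerivWithinAt_Icc {g : ℝ → ℝ} {p q : ℝ}
    (hg : ContinuousOn g (Icc p q)) :
    ∃ G : ℝ → ℝ, ∀ t ∈ Icc p q, HasDerivWithinAt G (g t) (Icc p q) t := by
  refine ⟨fun t => ∫ x in p..t, g x, fun t ht => ?_⟩
  have : Fact (t ∈ Icc p q) := ⟨ht⟩
  exact intervalIntegral.integral_hasDerivWithinAt_right
    ((hg.mono (uIcc_subset_Icc (left_mem_Icc.2 (ht.1.trans ht.2)) ht)).intervalIntegrable)
    (hg.stronglyMeasurableAtFilter_nhdsWithin measurableSet_Icc t) (hg t ht)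

theorem sign_preserved_of_neg_mul_le_deriv {w w' g : ℝ → ℝ} {p q : ℝ} (hpq : p ≤ q)
    (hg : ContinuousOn g (Icc p q))
    (hw : ∀ t ∈ Icc p q, HasDerivWithinAt w (w' t) (Icc p q) t)
    (h : ∀ t ∈ Icc p q, -(g t * w t) ≤ w' t) :
    (0 ≤ w p → 0 ≤ w q) ∧ (0 < w p → 0 < w q) := by
  obtain ⟨G, hG⟩ := hg.exists_hasDerivWithinAt_Icc
  have hderiv : ∀ t ∈ Icc p q, HasDerivWithinAt (fun t => w t * Real.exp (G t))
      ((w' t + g t * w t) * Real.exp (G t)) (Icc p q) t := fun t ht =>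
    ((hw t ht).mul (hG t ht).exp).congr_deriv (by ring)
  have hmono : MonotoneOn (fun t => w t * Real.exp (G t)) (Icc p q) := by
    refine monotoneOn_of_hasDerivWithinAt_nonneg (convex_Icc p q)
      (fun t ht => (hderiv t ht).continuousWithinAt)
      (fun t ht => (hderiv t (interior_subset ht)).mono interior_subset) fun t ht => ?_
    have := h t (interior_subset ht)
    exact mul_nonneg (by linarith) (Real.exp_pos _).le
  have hpq' : w p * Real.exp (G p) ≤ w q * Real.exp (G q) :=
    hmono (left_mem_Icc.2 hpq) (right_mem_Icc.2 hpq) hpq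
  have hEp := Real.exp_pos (G p)
  have hEq := Real.exp_pos (G q)
  exact ⟨fun h0 => nonneg_of_mul_nonneg_left ((mul_nonneg h0 hEp.le).trans hpq') hEq,
    fun h0 => pos_of_mul_pos_left ((mul_pos h0 hEp).trans_le hpq') hEq.le⟩

theorem hasDerivWithinAt_Ico_of_glue {E : Type*} [NormedAddCommGroup E] [NormedSpace ℝ E]
    {z φ : ℝ → E} {p s r : ℝ} (hps : p < s)
    (h₁ : ∀ t ∈ Ico p s, HasDerivWithinAt z (φ t) (Ico p s) t)
    (h₂ : ∀ t ∈ Icc s r, HasDerivWithinAt z (φ t) (Icc s r) t)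
    (hz : ContinuousWithinAt z (Iio s) s) (hφ : ContinuousWithinAt φ (Iio s) s) :
    ∀ t ∈ Ico p r, HasDerivWithinAt z (φ t) (Ico p r) t := by
  intro t ht
  rcases lt_trichotomy t s with hts | rfl | hst
  · refine (h₁ t ⟨ht.1, hts⟩).mono_of_mem_nhdsWithin ?_
    exact mem_nhdsWithin.2 ⟨Iio s, isOpen_Iio, hts, fun x hx => ⟨hx.2.1, hx.1⟩⟩
  · have hderiv : ∀ x ∈ Ioo p t, HasDerivAt z (φ x) x := fun x hx =>
      (h₁ x (Ioo_subset_Ico_self hx)).hasDerivAt (Ico_mem_nhds hx.1 hx.2)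
    have hleft : HasDerivWithinAt z (φ t) (Iic t) t :=
      hasDerivWithinAt_Iic_of_tendsto_deriv
        (fun x hx => (hderiv x hx).differentiableAt.differentiableWithinAt)
        (hz.mono fun _ hx => hx.2) (Ioo_mem_nhdsLT hps)
        (hφ.tendsto.congr' (eventually_of_mem (Ioo_mem_nhdsLT hps)
          fun x hx => (hderiv x hx).deriv.symm))
    exact (hleft.union (h₂ t ⟨le_rfl, ht.2.le⟩)).mono fun x hx =>
      (le_total x t).imp id fun htx => ⟨htx, hx.2.le⟩
  · refine (h₂ t ⟨hst.le, ht.2.le⟩).mono_of_mem_nhdsWithin ?_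
    exact mem_nhdsWithin.2 ⟨Ioi s, isOpen_Ioi, hst, fun x hx => ⟨hx.1.le, hx.2.2.le⟩⟩

theorem exists_tendsto_nhdsLT_of_abs_deriv_le {f f' : ℝ → ℝ} {p s C : ℝ} (hps : p < s)
    (hf : ∀ t ∈ Ico p s, HasDerivWithinAt f (f' t) (Ico p s) t)
    (hC : ∀ t ∈ Ico p s, |f' t| ≤ C) :
    ∃ L, Tendsto f (𝓝[<] s) (𝓝 L) := by
  have hlip : LipschitzOnWith C.toNNReal f (Ico p s) :=
    (convex_Ico p s).lipschitzOnWith_of_nnnorm_hasDerivWithin_le hf fun t ht => by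
      rw [← NNReal.coe_le_coe, coe_nnnorm, Real.norm_eq_abs]
      exact (hC t ht).trans (Real.le_coe_toNNReal C)
  obtain ⟨g, hg, hgf⟩ := hlip.extend_real
  exact ⟨g s, (hg.continuous.continuousWithinAt (s := Iio s)).tendsto.congr'
    (eventually_of_mem (Ico_mem_nhdsLT hps) fun t ht => (hgf ht).symm)⟩

theorem eIco_coe (t₀ s : ℝ) : eIco t₀ (s : EReal) = Ico t₀ s := by
  ext t
  simp [eIco, EReal.coe_lt_coe_iff]

theorem eIco_subset_eIco {t₀ : ℝ} {t₁ τ₀ : EReal} (h : t₁ ≤ τ₀) : eIco t₀ t₁ ⊆ eIco t₀ τ₀ :=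
  fun _ ht => ⟨ht.1, ht.2.trans_le h⟩

theorem Icc_subset_eIco {t₀ s : ℝ} {τ : EReal} (hs : (s : EReal) < τ) : Icc t₀ s ⊆ eIco t₀ τ :=
  fun _ ht => ⟨ht.1, (EReal.coe_le_coe_iff.2 ht.2).trans_lt hs⟩

/-- The vector field of (1.1); `abelRHS a b c d y t = abelField a b c d t (y t)` holds by `rfl`. -/
def abelField (a b c d : ℝ → ℝ) (t x : ℝ) : ℝ :=
  -(a t * x ^ 3 + b t * x ^ 2 + c t * x + d t)

section Abel

variable {a b c d y : ℝ → ℝ}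

theorem IsAbelSolOn.mono {S T : Set ℝ} (hy : IsAbelSolOn a b c d y S) (hTS : T ⊆ S) :
    IsAbelSolOn a b c d y T :=
  fun t ht => (hy t (hTS ht)).mono hTS

theorem IsAbelSolOn.continuousOn {S : Set ℝ} (hy : IsAbelSolOn a b c d y S) :
    ContinuousOn y S :=
  fun t ht => (hy t ht).continuousWithinAt

theorem abelField_sub (t x x' : ℝ) :
    abelField a b c d t x - abelField a b c d t x' =
      -((a t * (x ^ 2 + x * x' + x' ^ 2) + b t * (x + x') + c t) * (x - x')) := by
  unfold abelField
  ring

theorem abs_abelField_le (t x : ℝ) :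
    |abelField a b c d t x| ≤ (|a t| + |b t| + |c t| + |d t|) * (1 + |x|) ^ 3 := by
  have hx := abs_nonneg x
  have h3 : |x| ^ 3 ≤ (1 + |x|) ^ 3 := by gcongr; linarith
  have h2 : |x| ^ 2 ≤ (1 + |x|) ^ 3 := by nlinarith
  have h1 : |x| ≤ (1 + |x|) ^ 3 := by nlinarith
  have h0 : 1 ≤ (1 + |x|) ^ 3 := one_le_pow₀ (by linarith)
  calc |abelField a b c d t x|
      ≤ |a t| * |x| ^ 3 + |b t| * |x| ^ 2 + |c t| * |x| + |d t| := by
        rw [abelField, abs_neg, ← abs_pow, ← abs_pow, ← abs_mul, ← abs_mul, ← abs_mul]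
        exact (abs_add_le _ _).trans (add_le_add_left
          ((abs_add_le _ _).trans (add_le_add_left (abs_add_le _ _) _)) _)
    _ ≤ _ := by
        nlinarith [abs_nonneg (a t), abs_nonneg (b t), abs_nonneg (c t), abs_nonneg (d t)]

theorem abs_abelField_sub_le {P t x x' : ℝ} (hx : |x| ≤ P) (hx' : |x'| ≤ P) :
    |abelField a b c d t x - abelField a b c d t x'| ≤
      (|a t| + |b t| + |c t| + |d t|) * (3 * (1 + P) ^ 2) * |x - x'| := by
  have hP : 0 ≤ P := (abs_nonneg x).trans hx
  have hq : |x ^ 2 + x * x' + x' ^ 2| ≤ 3 * (1 + P) ^ 2 := by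
    rw [abs_le] at hx hx' ⊢
    constructor <;> nlinarith
  have hl : |x + x'| ≤ 3 * (1 + P) ^ 2 := by
    rw [abs_le] at hx hx' ⊢
    constructor <;> nlinarith
  have hc : (1 : ℝ) ≤ 3 * (1 + P) ^ 2 := by nlinarith
  rw [abelField_sub, abs_neg, abs_mul]
  gcongr
  calc |a t * (x ^ 2 + x * x' + x' ^ 2) + b t * (x + x') + c t|
      ≤ |a t| * |x ^ 2 + x * x' + x' ^ 2| + |b t| * |x + x'| + |c t| := by
        rw [← abs_mul, ← abs_mul]
        exact (abs_add_le _ _).trans (add_le_add_left (abs_add_le _ _) _)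
    _ ≤ (|a t| + |b t| + |c t| + |d t|) * (3 * (1 + P) ^ 2) := by
        nlinarith [abs_nonneg (a t), abs_nonneg (b t), abs_nonneg (c t), abs_nonneg (d t)]

theorem exists_coeff_bound {S : Set ℝ} (hS : IsCompact S) (ha : ContinuousOn a S)
    (hb : ContinuousOn b S) (hc : ContinuousOn c S) (hd : ContinuousOn d S) :
    ∃ M, ∀ t ∈ S, |a t| + |b t| + |c t| + |d t| ≤ M := by
  obtain ⟨M, hM⟩ := hS.exists_bound_of_continuousOn
    (((ha.abs.add hb.abs).add hc.abs).add hd.abs)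
  exact ⟨M, fun t ht => (le_abs_self _).trans (hM t ht)⟩

theorem abel_comparison {a₁ b₁ c₁ d₁ a₂ b₂ c₂ d₂ y₁ y₂ : ℝ → ℝ} {p q : ℝ} (hpq : p ≤ q)
    (ha : ContinuousOn a (Icc p q)) (hb : ContinuousOn b (Icc p q))
    (hc : ContinuousOn c (Icc p q))
    (hy₁ : IsAbelSolOn a₁ b₁ c₁ d₁ y₁ (Icc p q)) (hy₂ : IsAbelSolOn a₂ b₂ c₂ d₂ y₂ (Icc p q))
    (h : ∀ t ∈ Icc p q, abelRHS a₁ b₁ c₁ d₁ y₁ t - abelField a b c d t (y₁ t) ≤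
      abelRHS a₂ b₂ c₂ d₂ y₂ t - abelField a b c d t (y₂ t)) :
    (y₁ p ≤ y₂ p → y₁ q ≤ y₂ q) ∧ (y₁ p < y₂ p → y₁ q < y₂ q) := by
  have hy₁c := hy₁.continuousOn
  have hy₂c := hy₂.continuousOn
  have key := sign_preserved_of_neg_mul_le_deriv hpq (w := fun t => y₂ t - y₁ t)
    (g := fun t => a t * (y₂ t ^ 2 + y₂ t * y₁ t + y₁ t ^ 2) + b t * (y₂ t + y₁ t) + c t)
    (by fun_prop) (fun t ht => (hy₂ t ht).sub (hy₁ t ht)) fun t ht => by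
      linarith [h t ht, abelField_sub (a := a) (b := b) (c := c) (d := d) t (y₂ t) (y₁ t)]
  simpa only [sub_nonneg, sub_pos] using key

theorem exists_abelSol_Icc {p q : ℝ} (hpq : p < q)
    (ha : ContinuousOn a (Icc p q)) (hb : ContinuousOn b (Icc p q))
    (hc : ContinuousOn c (Icc p q)) (hd : ContinuousOn d (Icc p q)) (x₀ : ℝ) :
    ∃ r ∈ Ioc p q, ∃ u : ℝ → ℝ, u p = x₀ ∧ IsAbelSolOn a b c d u (Icc p r) := by
  obtain ⟨M, hM⟩ := exists_coeff_bound isCompact_Icc ha hb hc hd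
  have hM₀ : 0 ≤ M := by
    have := hM p (left_mem_Icc.2 hpq.le)
    linarith [abs_nonneg (a p), abs_nonneg (b p), abs_nonneg (c p), abs_nonneg (d p)]
  set P := |x₀| + 1
  have hP : ∀ x ∈ Metric.closedBall x₀ 1, |x| ≤ P := fun x hx => by
    have := abs_sub_abs_le_abs_sub x x₀
    rw [Metric.mem_closedBall, Real.dist_eq] at hx
    linarith
  set L := M * (1 + P) ^ 3
  have hL₀ : 0 ≤ L := by positivity
  set r := p + min (q - p) (1 / (L + 1))
  have hpr : p < r := by
    have : 0 < min (q - p) (1 / (L + 1)) := lt_min (by linarith) (by positivity)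
    linarith
  have hrq : r ≤ q := by linarith [min_le_left (q - p) (1 / (L + 1))]
  have hsub : Icc p r ⊆ Icc p q := Icc_subset_Icc_right hrq
  have hpl : IsPicardLindelof (abelField a b c d) (⟨p, left_mem_Icc.2 hpr.le⟩ : Icc p r) x₀ 1 0
      L.toNNReal (M * (3 * (1 + P) ^ 2)).toNNReal := by
    refine ⟨fun t ht => LipschitzOnWith.of_dist_le_mul fun x hx x' hx' => ?_,
      fun x _ => ?_, fun t ht x hx => ?_, ?_⟩
    · rw [Real.dist_eq, Real.dist_eq, Real.coe_toNNReal _ (by positivity)]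
      refine (abs_abelField_sub_le (hP x hx) (hP x' hx')).trans ?_
      gcongr
      exact hM t (hsub ht)
    · exact (((((ha.mono hsub).mul continuousOn_const).add
        ((hb.mono hsub).mul continuousOn_const)).add
        ((hc.mono hsub).mul continuousOn_const)).add (hd.mono hsub)).neg
    · rw [Real.norm_eq_abs, Real.coe_toNNReal _ hL₀]
      refine (abs_abelField_le t x).trans
        (mul_le_mul (hM t (hsub ht)) ?_ (by positivity) hM₀)
      gcongr
      exact hP x hx
    · have : L * (r - p) ≤ 1 := by
        calc L * (r - p) ≤ L * (1 / (L + 1)) := by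
              gcongr
              linarith [min_le_right (q - p) (1 / (L + 1))]
          _ ≤ 1 := by
              rw [mul_one_div, div_le_one (by positivity)]
              linarith
      simpa [Real.coe_toNNReal _ hL₀, hpr.le] using this
  obtain ⟨u, hu₀, hu⟩ := hpl.exists_eq_forall_mem_Icc_hasDerivWithinAt₀
  exact ⟨r, ⟨hpr, hrq⟩, u, hu₀, hu⟩

theorem exists_abelSol_extension {t₀ s₁ s₂ B : ℝ} (h₀₁ : t₀ < s₁) (h₁₂ : s₁ < s₂)
    (ha : ContinuousOn a (Icc t₀ s₂)) (hb : ContinuousOn b (Icc t₀ s₂))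
    (hc : ContinuousOn c (Icc t₀ s₂)) (hd : ContinuousOn d (Icc t₀ s₂))
    (hy : IsAbelSolOn a b c d y (Ico t₀ s₁)) (hB : ∀ t ∈ Ico t₀ s₁, |y t| ≤ B) :
    ∃ s₃ ∈ Ioc s₁ s₂, ∃ z, IsAbelSolOn a b c d z (Ico t₀ s₃) ∧ EqOn z y (Ico t₀ s₁) := by
  have hIcc₁ : Icc t₀ s₁ ⊆ Icc t₀ s₂ := Icc_subset_Icc_right h₁₂.le
  obtain ⟨M, hM⟩ := exists_coeff_bound isCompact_Icc (ha.mono hIcc₁) (hb.mono hIcc₁)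
    (hc.mono hIcc₁) (hd.mono hIcc₁)
  obtain ⟨L, hL⟩ := exists_tendsto_nhdsLT_of_abs_deriv_le h₀₁ hy
    (C := M * (1 + B) ^ 3) fun t ht => by
      have hM₀ : 0 ≤ M := le_trans (by positivity) (hM t (Ico_subset_Icc_self ht))
      refine (abs_abelField_le t (y t)).trans
        (mul_le_mul (hM t (Ico_subset_Icc_self ht)) ?_ (by positivity) hM₀)
      gcongr
      exact hB t ht
  have hIcc₂ : Icc s₁ s₂ ⊆ Icc t₀ s₂ := Icc_subset_Icc_left h₀₁.le
  obtain ⟨r, hr, u, hu₀, hu⟩ := exists_abelSol_Icc h₁₂ (ha.mono hIcc₂) (hb.mono hIcc₂)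
    (hc.mono hIcc₂) (hd.mono hIcc₂) L
  set z : ℝ → ℝ := fun t => if t < s₁ then y t else u t
  have hzy : EqOn z y (Iio s₁) := fun t ht => if_pos ht
  have hzu : EqOn z u (Icc s₁ r) := fun t ht => if_neg (not_lt.2 ht.1)
  have hz : ContinuousWithinAt z (Iio s₁) s₁ := by
    rw [ContinuousWithinAt, hzu (left_mem_Icc.2 hr.1.le), hu₀]
    exact hL.congr' (eventually_nhdsWithin_of_forall fun t ht => (hzy ht).symm)
  have hcoeff {f : ℝ → ℝ} (hf : ContinuousOn f (Icc t₀ s₂)) : ContinuousWithinAt f (Iio s₁) s₁ :=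
    (hf s₁ ⟨h₀₁.le, h₁₂.le⟩).mono_of_mem_nhdsWithin
      (mem_nhdsWithin.2 ⟨Ioi t₀, isOpen_Ioi, h₀₁, fun t ht => ⟨ht.1.le, ht.2.le.trans h₁₂.le⟩⟩)
  refine ⟨r, hr, z, hasDerivWithinAt_Ico_of_glue h₀₁ (φ := fun t => abelField a b c d t (z t))
    (fun t ht => ?_) (fun t ht => ?_) hz ?_, fun t ht => hzy ht.2⟩
  · rw [hzy ht.2]
    exact (hy t ht).congr (fun x hx => hzy hx.2) (hzy ht.2)
  · rw [hzu ht]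
    exact (hu t ht).congr hzu (hzu ht)
  · exact ((((hcoeff ha).mul (hz.pow 3)).add ((hcoeff hb).mul (hz.pow 2))).add
      ((hcoeff hc).mul hz)).add (hcoeff hd) |>.neg

end Abel

theorem Noncontinuable.eq_of_bounded {a b c d y : ℝ → ℝ} {t₀ : ℝ} {τ₀ t₁ : EReal}
    (hnc : Noncontinuable a b c d t₀ τ₀ t₁ y)
    (ha : ContinuousOn a (eIco t₀ τ₀)) (hb : ContinuousOn b (eIco t₀ τ₀))
    (hc : ContinuousOn c (eIco t₀ τ₀)) (hd : ContinuousOn d (eIco t₀ τ₀))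
    (ht₁ : (t₀ : EReal) < t₁) (ht₁' : t₁ ≤ τ₀) (hy : IsAbelSolOn a b c d y (eIco t₀ t₁))
    (hB : ∀ s : ℝ, (s : EReal) < τ₀ → ∃ B, ∀ t ∈ eIco t₀ t₁, t ≤ s → |y t| ≤ B) :
    t₁ = τ₀ := by
  by_contra hne
  have hlt := lt_of_le_of_ne ht₁' hne
  induction t₁ using EReal.rec with
  | bot => exact not_lt_bot ht₁
  | top => exact not_top_lt hlt
  | coe s₁ =>
    obtain ⟨s₂, h₁₂, h₂τ⟩ := EReal.lt_iff_exists_real_btwn.1 hlt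
    obtain ⟨B, hB⟩ := hB s₁ hlt
    have hI := Icc_subset_eIco (t₀ := t₀) h₂τ
    rw [eIco_coe] at hy hB
    obtain ⟨s₃, hs₃, z, hz, hzy⟩ := exists_abelSol_extension (EReal.coe_lt_coe_iff.1 ht₁)
      (EReal.coe_lt_coe_iff.1 h₁₂) (ha.mono hI) (hb.mono hI) (hc.mono hI) (hd.mono hI) hy
      fun t ht => hB t ht ht.2.le
    refine hnc ⟨s₃, z, EReal.coe_lt_coe_iff.2 hs₃.1,
      (EReal.coe_le_coe_iff.2 hs₃.2).trans h₂τ.le, ?_, ?_⟩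
    · rwa [eIco_coe]
    · rwa [eIco_coe]

theorem stmt_8_general (t₀ : ℝ) (τ₀ : EReal)
    (a b c d a₁ b₁ c₁ d₁ a₂ b₂ c₂ d₂ y₁ y₂ : ℝ → ℝ)
    (ha : ContinuousOn a (eIco t₀ τ₀)) (hb : ContinuousOn b (eIco t₀ τ₀))
    (hc : ContinuousOn c (eIco t₀ τ₀)) (hd : ContinuousOn d (eIco t₀ τ₀))
    (hy₁ : IsAbelSolOn a₁ b₁ c₁ d₁ y₁ (eIco t₀ τ₀))
    (hy₂ : IsAbelSolOn a₂ b₂ c₂ d₂ y₂ (eIco t₀ τ₀))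
    (hIV : ∀ t ∈ eIco t₀ τ₀, 0 ≤ (a₁ t - a t) * y₁ t ^ 3 + (b₁ t - b t) * y₁ t ^ 2 +
      (c₁ t - c t) * y₁ t + (d₁ t - d t))
    (hV : ∀ t ∈ eIco t₀ τ₀, (a₂ t - a t) * y₂ t ^ 3 + (b₂ t - b t) * y₂ t ^ 2 +
      (c₂ t - c t) * y₂ t + (d₂ t - d t) ≤ 0)
    (t₁ : EReal) (y : ℝ → ℝ) (ht₁ : (t₀ : EReal) < t₁) (ht₁' : t₁ ≤ τ₀)
    (hy : IsAbelSolOn a b c d y (eIco t₀ t₁))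
    (hnc : Noncontinuable a b c d t₀ τ₀ t₁ y)
    (hy0 : y t₀ ∈ Icc (y₁ t₀) (y₂ t₀)) :
    t₁ = τ₀ ∧ (∀ t ∈ eIco t₀ τ₀, y₁ t ≤ y t ∧ y t ≤ y₂ t) ∧
      (y₁ t₀ < y t₀ → ∀ t ∈ eIco t₀ τ₀, y₁ t < y t) ∧
      (y t₀ < y₂ t₀ → ∀ t ∈ eIco t₀ τ₀, y t < y₂ t) := by
  have hsub : eIco t₀ t₁ ⊆ eIco t₀ τ₀ := eIco_subset_eIco ht₁'
  have hcmp : ∀ s ∈ eIco t₀ t₁, (y₁ s ≤ y s ∧ y s ≤ y₂ s) ∧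
      (y₁ t₀ < y t₀ → y₁ s < y s) ∧ (y t₀ < y₂ t₀ → y s < y₂ s) := fun s hs => by
    have hI : Icc t₀ s ⊆ eIco t₀ t₁ := Icc_subset_eIco hs.2
    have hIτ := hI.trans hsub
    have lower := abel_comparison hs.1 (ha.mono hIτ) (hb.mono hIτ) (hc.mono hIτ)
      (hy₁.mono hIτ) (hy.mono hI) fun t ht => by
        simp only [abelRHS, abelField]
        linarith [hIV t (hIτ ht)]
    have upper := abel_comparison hs.1 (ha.mono hIτ) (hb.mono hIτ) (hc.mono hIτ)
      (hy.mono hI) (hy₂.mono hIτ) fun t ht => by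
        simp only [abelRHS, abelField]
        linarith [hV t (hIτ ht)]
    exact ⟨⟨lower.1 hy0.1, upper.1 hy0.2⟩, lower.2, upper.2⟩
  have hglobal : t₁ = τ₀ := hnc.eq_of_bounded ha hb hc hd ht₁ ht₁' hy fun s hs => by
    obtain ⟨B₁, hB₁⟩ := isCompact_Icc.exists_bound_of_continuousOn
      (hy₁.continuousOn.mono (Icc_subset_eIco (t₀ := t₀) hs))
    obtain ⟨B₂, hB₂⟩ := isCompact_Icc.exists_bound_of_continuousOn
      (hy₂.continuousOn.mono (Icc_subset_eIco (t₀ := t₀) hs))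
    refine ⟨max B₁ B₂, fun t ht hts => ?_⟩
    exact (abs_le_max_abs_abs (hcmp t ht).1.1 (hcmp t ht).1.2).trans
      (max_le_max (hB₁ t ⟨ht.1, hts⟩) (hB₂ t ⟨ht.1, hts⟩))
  subst hglobal
  exact ⟨rfl, fun t ht => (hcmp t ht).1, fun h t ht => (hcmp t ht).2.1 h,
    fun h t ht => (hcmp t ht).2.2 h⟩

/-- Theorem 3.5: two-sided comparison of solutions of (1.1) with solutions `y₁` of (2.1)
and `y₂` of (3.10) under the pointwise sign conditions (IV) and (V). -/
theorem stmt_8 (t₀ : ℝ) (τ₀ : EReal) (hτ : (t₀ : EReal) < τ₀)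
    (a b c d a₁ b₁ c₁ d₁ a₂ b₂ c₂ d₂ y₁ y₂ : ℝ → ℝ)
    (ha : ContinuousOn a (eIco t₀ τ₀)) (hb : ContinuousOn b (eIco t₀ τ₀))
    (hc : ContinuousOn c (eIco t₀ τ₀)) (hd : ContinuousOn d (eIco t₀ τ₀))
    (ha₁ : ContinuousOn a₁ (eIco t₀ τ₀)) (hb₁ : ContinuousOn b₁ (eIco t₀ τ₀))
    (hc₁ : ContinuousOn c₁ (eIco t₀ τ₀)) (hd₁ : ContinuousOn d₁ (eIco t₀ τ₀))
    (ha₂ : ContinuousOn a₂ (eIco t₀ τ₀)) (hb₂ : ContinuousOn b₂ (eIco t₀ τ₀))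
    (hc₂ : ContinuousOn c₂ (eIco t₀ τ₀)) (hd₂ : ContinuousOn d₂ (eIco t₀ τ₀))
    (hy₁ : IsAbelSolOn a₁ b₁ c₁ d₁ y₁ (eIco t₀ τ₀))
    (hy₂ : IsAbelSolOn a₂ b₂ c₂ d₂ y₂ (eIco t₀ τ₀))
    (h12 : y₁ t₀ ≤ y₂ t₀)
    (hIV : ∀ t ∈ eIco t₀ τ₀, 0 ≤ (a₁ t - a t) * y₁ t ^ 3 + (b₁ t - b t) * y₁ t ^ 2 +
      (c₁ t - c t) * y₁ t + (d₁ t - d t))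
    (hV : ∀ t ∈ eIco t₀ τ₀, (a₂ t - a t) * y₂ t ^ 3 + (b₂ t - b t) * y₂ t ^ 2 +
      (c₂ t - c t) * y₂ t + (d₂ t - d t) ≤ 0)
    (t₁ : EReal) (y : ℝ → ℝ) (ht₁ : (t₀ : EReal) < t₁) (ht₁' : t₁ ≤ τ₀)
    (hy : IsAbelSolOn a b c d y (eIco t₀ t₁))
    (hnc : Noncontinuable a b c d t₀ τ₀ t₁ y)
    (hy0 : y t₀ ∈ Icc (y₁ t₀) (y₂ t₀)) :
    t₁ = τ₀ ∧ (∀ t ∈ eIco t₀ τ₀, y₁ t ≤ y t ∧ y t ≤ y₂ t) ∧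
      (y₁ t₀ < y t₀ → ∀ t ∈ eIco t₀ τ₀, y₁ t < y t) ∧
      (y t₀ < y₂ t₀ → ∀ t ∈ eIco t₀ τ₀, y t < y₂ t) :=
  stmt_8_general t₀ τ₀ a b c d a₁ b₁ c₁ d₁ a₂ b₂ c₂ d₂ y₁ y₂ ha hb hc hd hy₁ hy₂ hIV hV t₁ y ht₁
    ht₁' hy hnc hy0
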